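/- Let Q be a finite acyclic quiver whose vertex set Q₀ = {1,…,n} is ordered head-before-tail, i.e. h(a) < t(a) for every arrow a. For each vertex i and each m ≥ 0, identify the space Λ_m of symmetric polynomials over ℚ in m variables with ℋ_{m·e_i} (in the variables ω_{i,1},…,ω_{i,m}). Then the ℚ-linear map ⊕_γ (Λ_{γ(1)} ⊗ Λ_{γ(2)} ⊗ ⋯ ⊗ Λ_{γ(n)}) → ℋ(Q), sending f₁ ⊗ ⋯ ⊗ f_n (with f_i ∈ ℋ_{γ(i)·e_i}) to the left-to-right CoHA product f₁ * f₂ * ⋯ * f_n ∈ ℋ_γ, is bijective; that is, the *-multiplication induces an isomorphism 𝒜_{e_1} ⊗ ⋯ ⊗ 𝒜_{e_n} ≅ ℋ(Q), where 𝒜_{e_i} = ⊕_{m≥0} ℋ_{m·e_i}. -/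

import Mathlib

open MvPolynomial
open scoped Classical

/-- A finite quiver with vertex set `Fin n`: a finite type of arrows together with
head and tail maps. -/
structure FinQuiver (n : ℕ) where
  Arr : Type
  [fintypeArr : Fintype Arr]
  hd : Arr → Fin n
  tl : Arr → Fin n

attribute [instance] FinQuiver.fintypeArr

variable {n : ℕ}

/-- `Q` is acyclic: there is no oriented cycle, i.e. no path
`a₁, …, a_{k+1}` (with `hd aₘ = tl aₘ₊₁`) whose final head equals its initial tail. -/
def FinQuiver.Acyclic (Q : FinQuiver n) : Prop :=
  ∀ (k : ℕ) (c : Fin (k + 1) → Q.Arr),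
    (∀ m : Fin k, Q.hd (c m.castSucc) = Q.tl (c m.succ)) →
    Q.hd (c (Fin.last k)) ≠ Q.tl (c 0)

/-- The Euler form `χ_Q` of the quiver `Q`. -/
def FinQuiver.euler (Q : FinQuiver n) (α β : Fin n → ℕ) : ℤ :=
  ∑ i : Fin n, (α i : ℤ) * β i - ∑ a : Q.Arr, (α (Q.tl a) : ℤ) * β (Q.hd a)

/-- The opposite antisymmetrization `⟨α,β⟩ = χ_Q(β,α) − χ_Q(α,β)`. -/
def FinQuiver.lam (Q : FinQuiver n) (α β : Fin n → ℕ) : ℤ :=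
  Q.euler β α - Q.euler α β

/-- The polynomial ring in the variables `ω_{i,j}`, `i ∈ Q₀`, `j ∈ ℕ` (0-indexed). -/
abbrev PolyQ (n : ℕ) := MvPolynomial (Fin n × ℕ) ℚ

/-- The permutation of the variables at vertex `i` induced by a permutation of `ℕ`. -/
def vertexPerm (i : Fin n) (σ : Equiv.Perm ℕ) : Fin n × ℕ → Fin n × ℕ :=
  fun p => if p.1 = i then (i, σ p.2) else p

/-- `f` is, for each vertex `i`, symmetric in the variables `ω_{i,0},…,ω_{i,γ i − 1}`. -/
def SymmIn (γ : Fin n → ℕ) (f : PolyQ n) : Prop :=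
  ∀ (i : Fin n) (σ : Equiv.Perm ℕ),
    (∀ j : ℕ, σ j ≠ j → j < γ i) → rename (vertexPerm i σ) f = f

lemma vars_smul_subset (c : ℚ) (f : PolyQ n) : (c • f).vars ⊆ f.vars := by
  rw [MvPolynomial.smul_eq_C_mul]
  refine (MvPolynomial.vars_mul _ _).trans ?_
  simp [MvPolynomial.vars_C]

/-- `ℋ_γ`: polynomials using only the variables `ω_{i,j}`, `j < γ i`, which are
symmetric at each vertex.  A `ℚ`-submodule of `PolyQ n`. -/
noncomputable def Hspace (γ : Fin n → ℕ) : Submodule ℚ (PolyQ n) where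
  carrier := {f | (∀ p ∈ f.vars, p.2 < γ p.1) ∧ SymmIn γ f}
  add_mem' := by
    rintro f g ⟨hf1, hf2⟩ ⟨hg1, hg2⟩
    refine ⟨fun p hp => ?_, fun i σ hσ => ?_⟩
    · rcases Finset.mem_union.mp (MvPolynomial.vars_add_subset f g hp) with h | h
      exacts [hf1 p h, hg1 p h]
    · rw [map_add, hf2 i σ hσ, hg2 i σ hσ]
  zero_mem' := by
    refine ⟨fun p hp => ?_, fun i σ hσ => map_zero _⟩
    simp [MvPolynomial.vars_0] at hp
  smul_mem' := by
    rintro c f ⟨hf1, hf2⟩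
    refine ⟨fun p hp => hf1 p (vars_smul_subset c f hp), fun i σ hσ => ?_⟩
    rw [map_smul, hf2 i σ hσ]

/-- Polynomials all of whose variables sit at vertex `i`. -/
noncomputable def onlyVertex (i : Fin n) : Submodule ℚ (PolyQ n) where
  carrier := {f | ∀ p ∈ f.vars, p.1 = i}
  add_mem' := by
    intro f g hf hg p hp
    rcases Finset.mem_union.mp (MvPolynomial.vars_add_subset f g hp) with h | h
    exacts [hf p h, hg p h]
  zero_mem' := by
    intro p hp
    simp [MvPolynomial.vars_0] at hp
  smul_mem' := by
    intro c f hf p hp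
    exact hf p (vars_smul_subset c f hp)

/-- `𝒜_{β,m}`: the subspace of `ℋ_{m·β}` of polynomials depending only on the
variables `ω_{i,0},…,ω_{i,m−1}` at the distinguished vertex `i`. -/
noncomputable def Aspace (β : Fin n → ℕ) (i : Fin n) (m : ℕ) : Submodule ℚ (PolyQ n) :=
  Hspace (fun v => m * β v) ⊓ onlyVertex i

/-- Substitute for the `j`-th variable at vertex `i` the variable `ω_{i,s}` where `s`
is the `j`-th element of `T i` in increasing order. -/
noncomputable def substAlong (T : Fin n → Finset ℕ) : PolyQ n →ₐ[ℚ] PolyQ n :=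
  aeval fun p : Fin n × ℕ => X (p.1, ((T p.1).sort (· ≤ ·)).getD p.2 0)

/-- The index set of the Kontsevich–Soibelman localization sum:
for each vertex, a `γ₁ i`-element subset of `{0,…,γ₁ i + γ₂ i − 1}`. -/
def shuffles (γ₁ γ₂ : Fin n → ℕ) : Finset (Fin n → Finset ℕ) :=
  Fintype.piFinset fun i => (Finset.range (γ₁ i + γ₂ i)).powerset.filter fun s => s.card = γ₁ i

def shuffleCompl (γ₁ γ₂ : Fin n → ℕ) (S : Fin n → Finset ℕ) : Fin n → Finset ℕ :=
  fun i => Finset.range (γ₁ i + γ₂ i) \ S i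

/-- The numerator factor attached to the arrow `a`:
`∏_{j' ∈ S̄_{h a}} ∏_{j ∈ S_{t a}} (ω_{h a, j'} − ω_{t a, j})`. -/
noncomputable def arrowFactor (Q : FinQuiver n) (γ₁ γ₂ : Fin n → ℕ)
    (S : Fin n → Finset ℕ) (a : Q.Arr) : PolyQ n :=
  ∏ j' ∈ shuffleCompl γ₁ γ₂ S (Q.hd a), ∏ j ∈ S (Q.tl a),
    (X (Q.hd a, j') - X (Q.tl a, j))

noncomputable def interactionNum (Q : FinQuiver n) (γ₁ γ₂ : Fin n → ℕ)
    (S : Fin n → Finset ℕ) : PolyQ n :=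
  ∏ a : Q.Arr, arrowFactor Q γ₁ γ₂ S a

noncomputable def interactionDen (γ₁ γ₂ : Fin n → ℕ) (S : Fin n → Finset ℕ) : PolyQ n :=
  ∏ i : Fin n, ∏ j' ∈ shuffleCompl γ₁ γ₂ S i, ∏ j ∈ S i, (X (i, j') - X (i, j))

/-- The Kontsevich–Soibelman localization sum, an element of the field of rational
functions (the fraction field of `PolyQ n`). -/
noncomputable def cohaMulRat (Q : FinQuiver n) (γ₁ γ₂ : Fin n → ℕ) (f₁ f₂ : PolyQ n) :
    FractionRing (PolyQ n) :=
  ∑ S ∈ shuffles γ₁ γ₂,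
    algebraMap (PolyQ n) (FractionRing (PolyQ n))
        (substAlong S f₁ * substAlong (shuffleCompl γ₁ γ₂ S) f₂ * interactionNum Q γ₁ γ₂ S) /
      algebraMap (PolyQ n) (FractionRing (PolyQ n)) (interactionDen γ₁ γ₂ S)

/-- The CoHA product `f₁ * f₂`: the unique polynomial representing the localization
sum (and `0` if the sum were not a polynomial, which never happens). -/
noncomputable def cohaMul (Q : FinQuiver n) (γ₁ γ₂ : Fin n → ℕ) (f₁ f₂ : PolyQ n) : PolyQ n :=
  if h : ∃ P : PolyQ n,
      algebraMap (PolyQ n) (FractionRing (PolyQ n)) P = cohaMulRat Q γ₁ γ₂ f₁ f₂ then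
    h.choose
  else 0

/-- Iterated, left-to-right, CoHA product of a list of dimension-vector/polynomial pairs.
Returns the total dimension vector together with the product. -/
noncomputable def cohaProd (Q : FinQuiver n) :
    List ((Fin n → ℕ) × PolyQ n) → (Fin n → ℕ) × PolyQ n
  | [] => (fun _ => 0, 1)
  | x :: xs => xs.foldl (fun acc y => (acc.1 + y.1, cohaMul Q acc.1 y.1 acc.2 y.2)) x

/-- Left-to-right CoHA product `f 0 * f 1 * ⋯ * f (r−1)` with `f u ∈ ℋ_{γ u}`. -/
noncomputable def cohaProdFin (Q : FinQuiver n) {r : ℕ} (γ : Fin r → Fin n → ℕ)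
    (f : Fin r → PolyQ n) : PolyQ n :=
  (cohaProd Q (List.ofFn fun u => (γ u, f u))).2

/-- The quiver with one vertex and no arrows. -/
def A1 : FinQuiver 1 := { Arr := Empty, hd := Empty.elim, tl := Empty.elim }

/-- `ψ_p = x₁ ^ p ∈ ℋ₁(A₁)`. -/
noncomputable def psi (p : ℕ) : PolyQ 1 := X ((0 : Fin 1), 0) ^ p

def oneDim : Fin 1 → ℕ := fun _ => 1

/-- The simple dimension vector `e_i`. -/
def simpleDim (i : Fin n) : Fin n → ℕ := fun v => if v = i then 1 else 0

/-- A subquiver of `Q`. -/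
structure Subquiver (Q : FinQuiver n) where
  verts : Finset (Fin n)
  arrows : Finset Q.Arr
  hd_mem : ∀ a ∈ arrows, Q.hd a ∈ verts
  tl_mem : ∀ a ∈ arrows, Q.tl a ∈ verts

def Subquiver.Full {Q : FinQuiver n} (Q' : Subquiver Q) : Prop :=
  ∀ a : Q.Arr, Q.hd a ∈ Q'.verts → Q.tl a ∈ Q'.verts → a ∈ Q'.arrows

/-- Adjacency in the underlying undirected graph of a subquiver. -/
def Subquiver.Adj {Q : FinQuiver n} (Q' : Subquiver Q) (x y : Fin n) : Prop :=
  ∃ a ∈ Q'.arrows, (Q.hd a = x ∧ Q.tl a = y) ∨ (Q.hd a = y ∧ Q.tl a = x)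

def Subquiver.Connected {Q : FinQuiver n} (Q' : Subquiver Q) : Prop :=
  ∀ x ∈ Q'.verts, ∀ y ∈ Q'.verts, Relation.ReflTransGen Q'.Adj x y

/-- The Euler form of the subquiver `Q'` (on `ℤ`-valued vectors). -/
def Subquiver.eulerZ {Q : FinQuiver n} (Q' : Subquiver Q) (α β : Fin n → ℤ) : ℤ :=
  ∑ i ∈ Q'.verts, α i * β i - ∑ a ∈ Q'.arrows, α (Q.tl a) * β (Q.hd a)

/-- Positive definiteness of the Tits form of `Q'` on vectors supported on `Q'`. -/
def Subquiver.PosDefTits {Q : FinQuiver n} (Q' : Subquiver Q) : Prop :=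
  ∀ β : Fin n → ℤ, (∀ i, i ∉ Q'.verts → β i = 0) → β ≠ 0 → 0 < Q'.eulerZ β β

/-- A connected full subquiver with positive definite Tits form. -/
def Subquiver.IsDynkin {Q : FinQuiver n} (Q' : Subquiver Q) : Prop :=
  Q'.Connected ∧ Q'.Full ∧ Q'.PosDefTits

/-- A positive root of `Q'`: a nonzero dimension vector supported on `Q'` with
Tits form equal to `1`. -/
def Subquiver.IsPosRoot {Q : FinQuiver n} (Q' : Subquiver Q) (β : Fin n → ℕ) : Prop :=
  (∀ i, i ∉ Q'.verts → β i = 0) ∧ β ≠ 0 ∧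
    Q'.eulerZ (fun i => (β i : ℤ)) (fun i => (β i : ℤ)) = 1

/-- A subquiver regarded as a quiver in its own right (on the ambient vertex set). -/
def Subquiver.toQuiver {Q : FinQuiver n} (Q' : Subquiver Q) : FinQuiver n :=
  { Arr := {a : Q.Arr // a ∈ Q'.arrows}, hd := fun a => Q.hd a.1, tl := fun a => Q.tl a.1 }

/-- An (ordered list) subquiver partition `𝒬• = (Q¹,…,Q^ℓ)`: nonempty connected
subquivers whose vertex sets partition `Q₀`. -/
structure SubqPartition (Q : FinQuiver n) (ℓ : ℕ) where
  part : Fin ℓ → Subquiver Q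
  nonempty' : ∀ j, (part j).verts.Nonempty
  connected' : ∀ j, (part j).Connected
  cover : ∀ i : Fin n, ∃! j, i ∈ (part j).verts

/-- The set `𝒬•₁` of arrows belonging to one of the parts. -/
noncomputable def SubqPartition.arrs {Q : FinQuiver n} {ℓ : ℕ} (P : SubqPartition Q ℓ) : Finset Q.Arr :=
  Finset.univ.biUnion fun j => (P.part j).arrows

/-- The partition is admissible and ordered: every arrow not inside a part goes from a
later part to an earlier part (head before tail). -/
def SubqPartition.Ordered {Q : FinQuiver n} {ℓ : ℕ} (P : SubqPartition Q ℓ) : Prop :=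
  ∀ a : Q.Arr, a ∉ P.arrs → ∀ i j : Fin ℓ,
    Q.hd a ∈ (P.part i).verts → Q.tl a ∈ (P.part j).verts → i < j

/-- Every part is a Dynkin subquiver. -/
def SubqPartition.Dynkin {Q : FinQuiver n} {ℓ : ℕ} (P : SubqPartition Q ℓ) : Prop :=
  ∀ j, (P.part j).IsDynkin

/-- `β : Fin r → (Fin n → ℕ)` is a Reineke-ordered enumeration of `Φ₊(𝒬•)`, with
`blk u` the part to which `β u` belongs: block-monotone, enumerating all positive roots
without repetition, and within each block `u < v → ⟨β u, β v⟩ ≥ 0`. -/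
def IsReinekeOrder {Q : FinQuiver n} {ℓ : ℕ} (P : SubqPartition Q ℓ) {r : ℕ}
    (β : Fin r → Fin n → ℕ) (blk : Fin r → Fin ℓ) : Prop :=
  Monotone blk ∧
  (∀ u, (P.part (blk u)).IsPosRoot (β u)) ∧
  Function.Injective β ∧
  (∀ j (b : Fin n → ℕ), (P.part j).IsPosRoot b → ∃ u, β u = b) ∧
  (∀ u v : Fin r, u < v → blk u = blk v → 0 ≤ Q.lam (β u) (β v))

open scoped TensorProduct DirectSum

/-!
Every arrow points from a later vertex to an earlier one. Hence, when `f₁ * ⋯ * f_n` is formed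
from left to right, the partial product `f₁ * ⋯ * f_{i-1}` and the next factor `f_i` have
disjoint supports and no arrow has its head at `i` and its tail at an earlier vertex. The
localization sum then has a single shuffle, whose numerator and denominator are empty products,
so the CoHA product is the ordinary product `f₁ ⋯ f_n`.

It remains to see that ordinary multiplication `⊗ᵢ Λ_{γ(i)} → ℋ_γ` is bijective. Products over
the vertices of monomial symmetric polynomials, indexed by a monotone exponent tuple at each
vertex, form a basis of `ℋ_γ` (a symmetric polynomial is determined by its coefficients at
monotone exponents), and multiplication maps the tensor product of the one-vertex bases onto it.
-/

namespace MvPolynomial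

variable {σ R : Type*} [CommSemiring R]

theorem aeval_eq_self_of_forall_mem_vars {g : σ → MvPolynomial σ R} {p : MvPolynomial σ R}
    (h : ∀ i ∈ p.vars, g i = X i) : aeval g p = p :=
  hom_congr_vars (f₂ := RingHom.id _) (by ext; simp) (fun i hi _ => by simpa using h i hi) rfl

theorem rename_eq_self_of_forall_mem_vars {g : σ → σ} {p : MvPolynomial σ R}
    (h : ∀ i ∈ p.vars, g i = i) : rename g p = p := by
  rw [rename_eq_aeval]
  exact aeval_eq_self_of_forall_mem_vars fun i hi => by rw [Function.comp_apply, h i hi]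

theorem exists_mem_support_of_mem_vars_sum_monomial [Nontrivial R] {ι : Type*} {s : Finset ι}
    {u : ι → σ →₀ ℕ} {p : σ} (hp : p ∈ (∑ k ∈ s, monomial (u k) (1 : R)).vars) :
    ∃ k ∈ s, p ∈ (u k).support := by
  classical
  obtain ⟨k, hk, hpk⟩ := Finset.mem_biUnion.mp (vars_sum_subset s _ hp)
  exact ⟨k, hk, by rwa [vars_monomial one_ne_zero] at hpk⟩

end MvPolynomial

theorem PiTensorProduct.lift_bijective_of_basis {ι R : Type*} [Fintype ι] [CommSemiring R]
    {κ : ι → Type*} {κ' : Type*} {M : ι → Type*} {N : Type*} [∀ i, AddCommMonoid (M i)]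
    [∀ i, Module R (M i)] [AddCommMonoid N] [Module R N] (b : ∀ i, Module.Basis (κ i) R (M i))
    (c : Module.Basis κ' R N) (e : (∀ i, κ i) ≃ κ') (μ : MultilinearMap R M N)
    (h : ∀ w, μ (fun i => b i (w i)) = c (e w)) : Function.Bijective (PiTensorProduct.lift μ) := by
  have : PiTensorProduct.lift μ = ((Basis.piTensorProduct b).equiv c e).toLinearMap :=
    (Basis.piTensorProduct b).ext fun w => by
      rw [LinearEquiv.coe_coe, Module.Basis.equiv_apply, Basis.piTensorProduct_apply,
        PiTensorProduct.lift.tprod, h]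
  rw [this]
  exact LinearEquiv.bijective _

/-- The first condition in `Hspace γ`. -/
def VarsBelow (γ : Fin n → ℕ) (f : PolyQ n) : Prop :=
  ∀ p ∈ f.vars, p.2 < γ p.1

theorem VarsBelow.mul {γ₁ γ₂ : Fin n → ℕ} {f₁ f₂ : PolyQ n} (h₁ : VarsBelow γ₁ f₁)
    (h₂ : VarsBelow γ₂ f₂) : VarsBelow (γ₁ + γ₂) (f₁ * f₂) := fun p hp => by
  rcases Finset.mem_union.mp (vars_mul f₁ f₂ hp) with h | h
  · exact (h₁ p h).trans_le (Nat.le_add_right _ _)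
  · exact (h₂ p h).trans_le (Nat.le_add_left _ _)

/-- The dimension vector `m • e_i`. -/
def vertexDim (i : Fin n) (m : ℕ) : Fin n → ℕ := fun v => if v = i then m else 0

theorem vertexDim_self (i : Fin n) (m : ℕ) : vertexDim i m i = m :=
  if_pos rfl

theorem varsBelow_vertexDim_iff {i : Fin n} {m : ℕ} {f : PolyQ n} :
    VarsBelow (vertexDim i m) f ↔ ∀ p ∈ f.vars, p.1 = i ∧ p.2 < m := by
  refine forall₂_congr fun p _ => ?_
  by_cases h : p.1 = i <;> simp [vertexDim, h]

/-- For such `γ₁` and `γ₂` the localization sum defining `f₁ * f₂` has a single term, with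
trivial interaction factors. -/
def FinQuiver.Unlinked (Q : FinQuiver n) (γ₁ γ₂ : Fin n → ℕ) : Prop :=
  (∀ v, γ₁ v = 0 ∨ γ₂ v = 0) ∧ ∀ a, γ₂ (Q.hd a) = 0 ∨ γ₁ (Q.tl a) = 0

theorem FinQuiver.Unlinked.add_left {Q : FinQuiver n} {γ₁ γ₂ γ₃ : Fin n → ℕ}
    (h₁ : Q.Unlinked γ₁ γ₃) (h₂ : Q.Unlinked γ₂ γ₃) : Q.Unlinked (γ₁ + γ₂) γ₃ := by
  refine ⟨fun v => ?_, fun a => ?_⟩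
  · rcases h₁.1 v with h | h <;> rcases h₂.1 v with h' | h' <;> simp_all
  · rcases h₁.2 a with h | h <;> rcases h₂.2 a with h' | h' <;> simp_all

theorem FinQuiver.unlinked_vertexDim {Q : FinQuiver n} (hht : ∀ a : Q.Arr, Q.hd a < Q.tl a)
    {i j : Fin n} (hij : i < j) (m m' : ℕ) : Q.Unlinked (vertexDim i m) (vertexDim j m') := by
  refine ⟨fun v => ?_, fun a => ?_⟩
  · by_cases hv : v = i
    · exact .inr (if_neg (hv ▸ hij.ne))
    · exact .inl (if_neg hv)
  · by_cases ha : Q.hd a = j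
    · exact .inr (if_neg fun ht => (hht a).not_gt (by rw [ha, ht]; exact hij))
    · exact .inl (if_neg ha)

section UnlinkedProduct

variable {Q : FinQuiver n} {γ₁ γ₂ : Fin n → ℕ}

theorem substAlong_range {γ : Fin n → ℕ} {f : PolyQ n} (hf : VarsBelow γ f) :
    substAlong (fun v => Finset.range (γ v)) f = f := by
  refine aeval_eq_self_of_forall_mem_vars fun p hp => ?_
  have hlt : p.2 < ((Finset.range (γ p.1)).sort (· ≤ ·)).length := by simpa using hf p hp
  rw [Finset.sort_range, List.getD_eq_getElem _ _ (by simpa using hlt)]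
  simp

theorem shuffles_eq_singleton (h : ∀ v, γ₁ v = 0 ∨ γ₂ v = 0) :
    shuffles γ₁ γ₂ = {fun v => Finset.range (γ₁ v)} := by
  ext S
  simp only [shuffles, Fintype.mem_piFinset, Finset.mem_filter, Finset.mem_powerset,
    Finset.mem_singleton]
  refine ⟨fun hS => funext fun v => ?_, ?_⟩
  · obtain ⟨hsub, hcard⟩ := hS v
    rcases h v with h0 | h0
    · rw [h0, Finset.range_zero]
      exact Finset.card_eq_zero.mp (hcard.trans h0)
    · rw [h0, add_zero] at hsub
      exact Finset.eq_of_subset_of_card_le hsub (by rw [hcard, Finset.card_range])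
  · rintro rfl v
    exact ⟨Finset.range_subset_range.2 (Nat.le_add_right _ _), Finset.card_range _⟩

theorem shuffleCompl_range (h : ∀ v, γ₁ v = 0 ∨ γ₂ v = 0) :
    shuffleCompl γ₁ γ₂ (fun v => Finset.range (γ₁ v)) = fun v => Finset.range (γ₂ v) := by
  funext v
  rcases h v with h0 | h0 <;> simp [shuffleCompl, h0]

theorem interactionNum_range (h : Q.Unlinked γ₁ γ₂) :
    interactionNum Q γ₁ γ₂ (fun v => Finset.range (γ₁ v)) = 1 := by
  refine Finset.prod_eq_one fun a _ => ?_
  rw [arrowFactor, shuffleCompl_range h.1]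
  rcases h.2 a with h0 | h0 <;> simp [h0]

theorem interactionDen_range (h : ∀ v, γ₁ v = 0 ∨ γ₂ v = 0) :
    interactionDen γ₁ γ₂ (fun v => Finset.range (γ₁ v)) = 1 := by
  refine Finset.prod_eq_one fun v _ => ?_
  rw [shuffleCompl_range h]
  rcases h v with h0 | h0 <;> simp [h0]

theorem cohaMul_eq_of_algebraMap_eq {f₁ f₂ P : PolyQ n}
    (hP : algebraMap (PolyQ n) (FractionRing (PolyQ n)) P = cohaMulRat Q γ₁ γ₂ f₁ f₂) :
    cohaMul Q γ₁ γ₂ f₁ f₂ = P := by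
  have hex : ∃ P : PolyQ n,
      algebraMap (PolyQ n) (FractionRing (PolyQ n)) P = cohaMulRat Q γ₁ γ₂ f₁ f₂ := ⟨P, hP⟩
  rw [cohaMul, dif_pos hex]
  exact IsFractionRing.injective (PolyQ n) (FractionRing (PolyQ n))
    (hex.choose_spec.trans hP.symm)

theorem cohaMul_eq_mul_of_unlinked {f₁ f₂ : PolyQ n} (h : Q.Unlinked γ₁ γ₂)
    (h₁ : VarsBelow γ₁ f₁) (h₂ : VarsBelow γ₂ f₂) : cohaMul Q γ₁ γ₂ f₁ f₂ = f₁ * f₂ := by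
  refine cohaMul_eq_of_algebraMap_eq ?_
  rw [cohaMulRat, shuffles_eq_singleton h.1, Finset.sum_singleton, shuffleCompl_range h.1,
    substAlong_range h₁, substAlong_range h₂, interactionNum_range h, interactionDen_range h.1,
    mul_one, map_one, div_one]

theorem foldl_cohaMul_eq_of_pairwise_unlinked {l : List ((Fin n → ℕ) × PolyQ n)}
    (hl : l.Pairwise fun x y => Q.Unlinked x.1 y.1) (hvars : ∀ x ∈ l, VarsBelow x.1 x.2)
    {acc : (Fin n → ℕ) × PolyQ n} (hacc : ∀ y ∈ l, Q.Unlinked acc.1 y.1)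
    (hacc' : VarsBelow acc.1 acc.2) :
    l.foldl (fun acc y => (acc.1 + y.1, cohaMul Q acc.1 y.1 acc.2 y.2)) acc =
      (acc.1 + (l.map Prod.fst).sum, acc.2 * (l.map Prod.snd).prod) := by
  induction l generalizing acc with
  | nil => simp
  | cons y l ih =>
    obtain ⟨hy, hl⟩ := List.pairwise_cons.mp hl
    have hmul : cohaMul Q acc.1 y.1 acc.2 y.2 = acc.2 * y.2 :=
      cohaMul_eq_mul_of_unlinked (hacc y List.mem_cons_self) hacc' (hvars y List.mem_cons_self)
    rw [List.foldl_cons, hmul, ih (acc := (acc.1 + y.1, acc.2 * y.2)) hl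
      (fun x hx => hvars x (List.mem_cons_of_mem y hx))
      (fun z hz => (hacc z (List.mem_cons_of_mem y hz)).add_left (hy z hz))
      (hacc'.mul (hvars y List.mem_cons_self))]
    simp [add_assoc, mul_assoc]

theorem cohaProd_eq_of_pairwise_unlinked {l : List ((Fin n → ℕ) × PolyQ n)}
    (hl : l.Pairwise fun x y => Q.Unlinked x.1 y.1) (hvars : ∀ x ∈ l, VarsBelow x.1 x.2) :
    cohaProd Q l = ((l.map Prod.fst).sum, (l.map Prod.snd).prod) := by
  cases l with
  | nil => rfl
  | cons x l =>
    obtain ⟨hx, hl⟩ := List.pairwise_cons.mp hl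
    rw [cohaProd, foldl_cohaMul_eq_of_pairwise_unlinked hl
      (fun y hy => hvars y (List.mem_cons_of_mem x hy)) hx (hvars x List.mem_cons_self)]
    simp

theorem cohaProdFin_eq_prod {r : ℕ} {γ : Fin r → Fin n → ℕ} {f : Fin r → PolyQ n}
    (h : ∀ u v, u < v → Q.Unlinked (γ u) (γ v)) (hf : ∀ u, VarsBelow (γ u) (f u)) :
    cohaProdFin Q γ f = ∏ u, f u := by
  rw [cohaProdFin, cohaProd_eq_of_pairwise_unlinked (List.pairwise_ofFn.mpr h)
    (by simpa using hf)]
  simp [List.prod_ofFn]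

end UnlinkedProduct

noncomputable def vertexExp (i : Fin n) {m : ℕ} (e : Fin m → ℕ) : (Fin n × ℕ) →₀ ℕ :=
  ∑ j : Fin m, Finsupp.single (i, (j : ℕ)) (e j)

noncomputable def tupleExp (γ : Fin n → ℕ) (t : ∀ i, Fin (γ i) → ℕ) : (Fin n × ℕ) →₀ ℕ :=
  ∑ i, vertexExp i (t i)

theorem vertexExp_apply (i : Fin n) {m : ℕ} (e : Fin m → ℕ) (v : Fin n) (k : ℕ) :
    vertexExp i e (v, k) = if h : v = i ∧ k < m then e ⟨k, h.2⟩ else 0 := by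
  rw [vertexExp, Finsupp.finsetSum_apply]
  split_ifs with h
  · obtain ⟨rfl, hk⟩ := h
    rw [Finset.sum_eq_single ⟨k, hk⟩ (fun j _ hj => by
      simp [Finsupp.single_apply, Fin.ext_iff] at hj ⊢; omega) (by simp)]
    simp
  · refine Finset.sum_eq_zero fun j _ => Finsupp.single_eq_of_ne ?_
    rintro ⟨rfl, rfl⟩
    exact h ⟨rfl, j.2⟩

theorem tupleExp_apply (γ : Fin n → ℕ) (t : ∀ i, Fin (γ i) → ℕ) (v : Fin n) (k : ℕ) :
    tupleExp γ t (v, k) = if h : k < γ v then t v ⟨k, h⟩ else 0 := by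
  rw [tupleExp, Finsupp.finsetSum_apply, Finset.sum_eq_single v (fun i _ hi => by
    simp [vertexExp_apply, Ne.symm hi]) (by simp)]
  simp [vertexExp_apply]

theorem tupleExp_injective (γ : Fin n → ℕ) : Function.Injective (tupleExp γ) := by
  intro t t' h
  funext i j
  simpa [tupleExp_apply] using DFunLike.congr_fun h (i, (j : ℕ))

theorem exists_tupleExp_eq {γ : Fin n → ℕ} {u : (Fin n × ℕ) →₀ ℕ}
    (hu : ∀ p ∈ u.support, p.2 < γ p.1) : ∃ t, tupleExp γ t = u := by
  refine ⟨fun i j => u (i, j), Finsupp.ext fun ⟨v, k⟩ => ?_⟩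
  rw [tupleExp_apply]
  split_ifs with hk
  · rfl
  · by_contra hne
    exact hk (hu (v, k) (Finsupp.mem_support_iff.2 (Ne.symm hne)))

noncomputable def permOrbit {m : ℕ} (e : Fin m → ℕ) : Finset (Fin m → ℕ) :=
  Finset.univ.image fun τ : Equiv.Perm (Fin m) => e ∘ τ

theorem mem_permOrbit {m : ℕ} {e e' : Fin m → ℕ} :
    e' ∈ permOrbit e ↔ ∃ τ : Equiv.Perm (Fin m), e ∘ τ = e' := by
  simp [permOrbit]

theorem self_mem_permOrbit {m : ℕ} (e : Fin m → ℕ) : e ∈ permOrbit e :=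
  mem_permOrbit.2 ⟨1, rfl⟩

theorem eq_of_mem_permOrbit_of_monotone {m : ℕ} {e e' : Fin m → ℕ} (h : e' ∈ permOrbit e)
    (he : Monotone e) (he' : Monotone e') : e = e' := by
  obtain ⟨τ, rfl⟩ := mem_permOrbit.1 h
  exact Tuple.unique_monotone (f := e) (σ := 1) he he'

noncomputable def vertexMsymm (i : Fin n) {m : ℕ} (e : Fin m → ℕ) : PolyQ n :=
  ∑ e' ∈ permOrbit e, monomial (vertexExp i e') 1

noncomputable def blockMsymm (γ : Fin n → ℕ) (t : ∀ i, Fin (γ i) → ℕ) : PolyQ n :=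
  ∏ i, vertexMsymm i (t i)

theorem blockMsymm_eq_sum (γ : Fin n → ℕ) (t : ∀ i, Fin (γ i) → ℕ) :
    blockMsymm γ t =
      ∑ t' ∈ Fintype.piFinset fun i => permOrbit (t i), monomial (tupleExp γ t') 1 := by
  simp only [blockMsymm, vertexMsymm, Finset.prod_univ_sum, tupleExp, monomial_sum_one]

theorem coeff_tupleExp_blockMsymm (γ : Fin n → ℕ) (t t' : ∀ i, Fin (γ i) → ℕ) :
    coeff (tupleExp γ t') (blockMsymm γ t) = if ∀ i, t' i ∈ permOrbit (t i) then 1 else 0 := by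
  simp only [blockMsymm_eq_sum, coeff_sum, coeff_monomial, (tupleExp_injective γ).eq_iff,
    Finset.sum_ite_eq', Fintype.mem_piFinset]

theorem vertexMsymm_of_eq_zero (i : Fin n) {m : ℕ} (hm : m = 0) (e : Fin m → ℕ) :
    vertexMsymm i e = 1 := by
  subst hm
  have : permOrbit e = {e} := Finset.eq_singleton_iff_unique_mem.2
    ⟨self_mem_permOrbit e, fun _ _ => Subsingleton.elim _ _⟩
  simp [vertexMsymm, this, vertexExp]

theorem vertexPerm_injective (i : Fin n) (σ : Equiv.Perm ℕ) :
    Function.Injective (vertexPerm i σ) := by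
  refine Function.LeftInverse.injective (g := vertexPerm i σ.symm) fun ⟨v, k⟩ => ?_
  by_cases h : v = i <;> simp [vertexPerm, h]

theorem rename_vertexPerm_eq_self {i : Fin n} (σ : Equiv.Perm ℕ) {f : PolyQ n}
    (hf : ∀ p ∈ f.vars, p.1 ≠ i) : rename (vertexPerm i σ) f = f :=
  rename_eq_self_of_forall_mem_vars fun p hp => if_neg (hf p hp)

theorem mapDomain_vertexPerm_vertexExp_of_ne {i v : Fin n} (h : v ≠ i) (σ : Equiv.Perm ℕ)
    {m : ℕ} (e : Fin m → ℕ) :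
    Finsupp.mapDomain (vertexPerm i σ) (vertexExp v e) = vertexExp v e := by
  simp only [vertexExp, Finsupp.mapDomain_finsetSum, Finsupp.mapDomain_single, vertexPerm,
    if_neg h]

theorem mapDomain_vertexPerm_vertexExp_self (i : Fin n) {m : ℕ} {σ : Equiv.Perm ℕ}
    {τ : Equiv.Perm (Fin m)} (hστ : ∀ j : Fin m, σ j = τ j) (e : Fin m → ℕ) :
    Finsupp.mapDomain (vertexPerm i σ) (vertexExp i e) = vertexExp i (e ∘ τ.symm) := by
  simp only [vertexExp, Finsupp.mapDomain_finsetSum, Finsupp.mapDomain_single, vertexPerm, hστ]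
  exact Fintype.sum_equiv τ _ _ fun j => by simp

theorem exists_perm_fin_of_support_lt {m : ℕ} {σ : Equiv.Perm ℕ} (hσ : ∀ j, σ j ≠ j → j < m) :
    ∃ τ : Equiv.Perm (Fin m), ∀ j : Fin m, σ j = τ j := by
  have hfix : ∀ j, m ≤ j → σ j = j := fun j hj => not_not.1 fun h => (hσ j h).not_ge hj
  have hlt : ∀ j, j < m ↔ σ j < m := fun j => by
    refine ⟨fun hj => not_le.1 fun h => ?_, fun hj => not_le.1 fun h => ?_⟩
    · have := σ.injective (hfix _ h)
      omega
    · exact h.not_gt (hfix j h ▸ hj)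
  exact ⟨Fin.equivSubtype.trans ((σ.subtypePerm fun j => (hlt j).symm).trans
    Fin.equivSubtype.symm), fun j => rfl⟩

theorem rename_vertexPerm_vertexMsymm (i : Fin n) {m : ℕ} (e : Fin m → ℕ) {σ : Equiv.Perm ℕ}
    (hσ : ∀ j, σ j ≠ j → j < m) :
    rename (vertexPerm i σ) (vertexMsymm i e) = vertexMsymm i e := by
  obtain ⟨τ, hστ⟩ := exists_perm_fin_of_support_lt hσ
  simp only [vertexMsymm, map_sum, rename_monomial, mapDomain_vertexPerm_vertexExp_self i hστ]
  refine Finset.sum_nbij' (· ∘ τ.symm) (· ∘ τ) (fun e' he' => ?_) (fun e' he' => ?_)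
    (fun e' _ => by ext; simp) (fun e' _ => by ext; simp) (fun _ _ => rfl)
  · obtain ⟨τ', rfl⟩ := mem_permOrbit.1 he'
    exact mem_permOrbit.2 ⟨τ' * τ.symm, rfl⟩
  · obtain ⟨τ', rfl⟩ := mem_permOrbit.1 he'
    exact mem_permOrbit.2 ⟨τ' * τ, rfl⟩

theorem vertexMsymm_mem_Hspace (i : Fin n) {m : ℕ} (e : Fin m → ℕ) :
    vertexMsymm i e ∈ Hspace (vertexDim i m) := by
  have hvars : VarsBelow (vertexDim i m) (vertexMsymm i e) := by
    refine varsBelow_vertexDim_iff.2 fun p hp => ?_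
    obtain ⟨e', -, hpe'⟩ := exists_mem_support_of_mem_vars_sum_monomial hp
    obtain ⟨v, k⟩ := p
    by_contra h
    simp_all [vertexExp_apply]
  refine ⟨hvars, fun i₀ σ hσ => ?_⟩
  by_cases h : i₀ = i
  · subst h
    exact rename_vertexPerm_vertexMsymm i₀ e fun j hj => by simpa [vertexDim] using hσ j hj
  · exact rename_vertexPerm_eq_self σ fun p hp =>
      ((varsBelow_vertexDim_iff.1 hvars p hp).1).trans_ne (Ne.symm h)

theorem prod_mem_Hspace {γ : Fin n → ℕ} {f : Fin n → PolyQ n}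
    (hf : ∀ i, f i ∈ Hspace (vertexDim i (γ i))) : ∏ i, f i ∈ Hspace γ := by
  have hvars : ∀ i, ∀ p ∈ (f i).vars, p.1 = i ∧ p.2 < γ i := fun i =>
    varsBelow_vertexDim_iff.1 (hf i).1
  refine ⟨fun p hp => ?_, fun i₀ σ hσ => ?_⟩
  · obtain ⟨i, -, hpi⟩ := Finset.mem_biUnion.mp (vars_prod _ hp)
    obtain ⟨rfl, hlt⟩ := hvars i p hpi
    exact hlt
  · rw [map_prod]
    refine Finset.prod_congr rfl fun i _ => ?_
    by_cases h : i = i₀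
    · subst h
      exact (hf i).2 i σ fun j hj => by simpa [vertexDim] using hσ j hj
    · exact rename_vertexPerm_eq_self σ fun p hp => ((hvars i p hp).1).trans_ne h

theorem blockMsymm_mem_Hspace (γ : Fin n → ℕ) (t : ∀ i, Fin (γ i) → ℕ) :
    blockMsymm γ t ∈ Hspace γ :=
  prod_mem_Hspace fun i => vertexMsymm_mem_Hspace i (t i)

theorem coeff_tupleExp_update_comp {γ : Fin n → ℕ} {f : PolyQ n} (hf : SymmIn γ f)
    (t : ∀ i, Fin (γ i) → ℕ) (i : Fin n) (τ : Equiv.Perm (Fin (γ i))) :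
    coeff (tupleExp γ (Function.update t i (t i ∘ τ))) f = coeff (tupleExp γ t) f := by
  set σ : Equiv.Perm ℕ := τ.extendDomain Fin.equivSubtype
  have hστ : ∀ j : Fin (γ i), σ j = τ j := τ.extendDomain_apply_image Fin.equivSubtype
  have hσ : ∀ j, σ j ≠ j → j < γ i := fun j hj => not_le.1 fun h =>
    hj (τ.extendDomain_apply_not_subtype Fin.equivSubtype (by simpa using h))
  have hmap : Finsupp.mapDomain (vertexPerm i σ)
      (tupleExp γ (Function.update t i (t i ∘ τ))) = tupleExp γ t := by
    simp only [tupleExp, Finsupp.mapDomain_finsetSum]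
    refine Finset.sum_congr rfl fun v _ => ?_
    by_cases h : v = i
    · subst h
      rw [Function.update_self, mapDomain_vertexPerm_vertexExp_self v hστ]
      congr 1
      ext
      simp
    · rw [Function.update_of_ne h, mapDomain_vertexPerm_vertexExp_of_ne h]
  rw [← hmap, ← coeff_rename_mapDomain _ (vertexPerm_injective i σ), hf i σ hσ]

theorem coeff_tupleExp_comp_perm {γ : Fin n → ℕ} {f : PolyQ n} (hf : SymmIn γ f)
    (t : ∀ i, Fin (γ i) → ℕ) (τ : ∀ i, Equiv.Perm (Fin (γ i))) :
    coeff (tupleExp γ fun i => t i ∘ τ i) f = coeff (tupleExp γ t) f := by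
  suffices h : ∀ s : Finset (Fin n),
      coeff (tupleExp γ fun i => if i ∈ s then t i ∘ τ i else t i) f = coeff (tupleExp γ t) f by
    simpa using h Finset.univ
  intro s
  induction s using Finset.induction_on with
  | empty => simp
  | insert i s hi ih =>
    rw [← ih, ← coeff_tupleExp_update_comp hf (fun v => if v ∈ s then t v ∘ τ v else t v) i
      (τ i)]
    congr 2
    funext v
    by_cases h : v = i
    · subst h
      simp [hi]
    · simp [h]

abbrev MonoTuple (m : ℕ) : Type := {e : Fin m → ℕ // Monotone e}

/-- Monotone tuples represent the orbits of exponent tuples under permutations at each vertex. -/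
abbrev MonoIdx (γ : Fin n → ℕ) : Type := ∀ i, MonoTuple (γ i)

def MonoIdx.tuple {γ : Fin n → ℕ} (d : MonoIdx γ) : ∀ i, Fin (γ i) → ℕ := fun i => (d i).1

theorem MonoIdx.tuple_injective {γ : Fin n → ℕ} :
    Function.Injective (MonoIdx.tuple (γ := γ)) :=
  fun _ _ h => funext fun i => Subtype.ext (congrFun h i)

/-- Every admissible exponent is a permutation of a monotone one, and the coefficients of a
symmetric polynomial are constant along such permutations. -/
theorem eq_zero_of_coeff_monoIdx_eq_zero {γ : Fin n → ℕ} {f : PolyQ n} (hf : f ∈ Hspace γ)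
    (h : ∀ d : MonoIdx γ, coeff (tupleExp γ d.tuple) f = 0) : f = 0 := by
  ext u
  by_contra hu
  obtain ⟨t, rfl⟩ := exists_tupleExp_eq (γ := γ) (u := u) fun p hp =>
    hf.1 p ((mem_vars_iff_mem_support p).2 ⟨u, mem_support_iff.2 hu, hp⟩)
  refine hu ?_
  rw [coeff_zero, ← coeff_tupleExp_comp_perm hf.2 t fun i => Tuple.sort (t i)]
  exact h fun i => ⟨t i ∘ Tuple.sort (t i), Tuple.monotone_sort _⟩

theorem coeff_tupleExp_blockMsymm_monoIdx {γ : Fin n → ℕ} (d d₀ : MonoIdx γ) :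
    coeff (tupleExp γ d₀.tuple) (blockMsymm γ d.tuple) = if d = d₀ then 1 else 0 := by
  rw [coeff_tupleExp_blockMsymm]
  by_cases hd : d = d₀
  · simp [hd, self_mem_permOrbit]
  · rw [if_neg hd, if_neg fun h => hd (funext fun i =>
      Subtype.ext (eq_of_mem_permOrbit_of_monotone (h i) (d i).2 (d₀ i).2))]

theorem linearIndependent_blockMsymm (γ : Fin n → ℕ) :
    LinearIndependent ℚ fun d : MonoIdx γ => blockMsymm γ d.tuple := by
  refine linearIndependent_iff'.2 fun s g hsum d₀ hd₀ => ?_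
  have := congrArg (coeff (tupleExp γ d₀.tuple)) hsum
  simpa [coeff_sum, coeff_tupleExp_blockMsymm_monoIdx, hd₀] using this

theorem span_blockMsymm (γ : Fin n → ℕ) :
    Submodule.span ℚ (Set.range fun d : MonoIdx γ => blockMsymm γ d.tuple) = Hspace γ := by
  refine le_antisymm (Submodule.span_le.2 ?_) fun f hf => ?_
  · rintro _ ⟨d, rfl⟩
    exact blockMsymm_mem_Hspace γ _
  set T : Finset (MonoIdx γ) := f.support.preimage (fun d => tupleExp γ d.tuple)
    ((tupleExp_injective γ).comp MonoIdx.tuple_injective).injOn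
  set g := ∑ d ∈ T, coeff (tupleExp γ d.tuple) f • blockMsymm γ d.tuple
  have hg : g ∈ Submodule.span ℚ (Set.range fun d : MonoIdx γ => blockMsymm γ d.tuple) :=
    Submodule.sum_mem _ fun d _ => Submodule.smul_mem _ _ (Submodule.subset_span ⟨d, rfl⟩)
  suffices f - g = 0 by rwa [sub_eq_zero.1 this]
  have hgH : g ∈ Hspace γ :=
    Submodule.sum_mem _ fun d _ => Submodule.smul_mem _ _ (blockMsymm_mem_Hspace γ _)
  refine eq_zero_of_coeff_monoIdx_eq_zero (sub_mem hf hgH) fun d₀ => ?_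
  simp only [g, coeff_sub, coeff_sum, coeff_smul, coeff_tupleExp_blockMsymm_monoIdx, smul_eq_mul,
    mul_ite, mul_one, mul_zero, Finset.sum_ite_eq']
  split_ifs with hd₀
  · exact sub_self _
  · simpa [T] using hd₀

noncomputable def hspaceBasis (γ : Fin n → ℕ) : Module.Basis (MonoIdx γ) ℚ (Hspace γ) :=
  (Module.Basis.span (linearIndependent_blockMsymm γ)).map
    (LinearEquiv.ofEq _ _ (span_blockMsymm γ))

theorem coe_hspaceBasis (γ : Fin n → ℕ) (d : MonoIdx γ) :
    (hspaceBasis γ d : PolyQ n) = blockMsymm γ d.tuple := by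
  simp [hspaceBasis, Module.Basis.span_apply]

theorem subsingleton_monoTuple {m : ℕ} (hm : m = 0) : Subsingleton (MonoTuple m) := by
  subst hm
  exact ⟨fun _ _ => Subtype.ext (Subsingleton.elim _ _)⟩

noncomputable def vertexMonoIdxEquiv (i : Fin n) (m : ℕ) :
    MonoIdx (vertexDim i m) ≃ MonoTuple m where
  toFun d := Equiv.cast (congrArg MonoTuple (vertexDim_self i m)) (d i)
  invFun e v := if h : v = i then Equiv.cast (congrArg MonoTuple (by rw [h, vertexDim_self])) e
    else ⟨fun _ => 0, monotone_const⟩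
  left_inv d := funext fun v => by
    by_cases h : v = i
    · subst h
      simp
    · have := subsingleton_monoTuple (m := vertexDim i m v) (if_neg h)
      exact Subsingleton.elim _ _
  right_inv e := by simp

theorem vertexMsymm_cast (i : Fin n) {m m' : ℕ} (h : m = m') (e : MonoTuple m) :
    vertexMsymm i (Equiv.cast (congrArg MonoTuple h) e).1 = vertexMsymm i e.1 := by
  subst h
  rfl

theorem blockMsymm_vertexDim (i : Fin n) {m : ℕ} (d : MonoIdx (vertexDim i m)) :
    blockMsymm (vertexDim i m) d.tuple = vertexMsymm i (vertexMonoIdxEquiv i m d).1 :=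
  (Fintype.prod_eq_single i fun v hv => vertexMsymm_of_eq_zero v (if_neg hv) _).trans
    (vertexMsymm_cast i (vertexDim_self i m) (d i)).symm

noncomputable def prodMultilinear (γ : Fin n → ℕ) :
    MultilinearMap ℚ (fun i => Hspace (vertexDim i (γ i))) (Hspace γ) :=
  ((MultilinearMap.mkPiAlgebra ℚ (Fin n) (PolyQ n)).compLinearMap
    fun i => (Hspace (vertexDim i (γ i))).subtype).codRestrict (Hspace γ)
      fun f => prod_mem_Hspace fun i => (f i).2

theorem coe_prodMultilinear (γ : Fin n → ℕ) (f : ∀ i, Hspace (vertexDim i (γ i))) :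
    (prodMultilinear γ f : PolyQ n) = ∏ i, (f i : PolyQ n) :=
  rfl

theorem prodMultilinear_hspaceBasis (γ : Fin n → ℕ) (w : ∀ i, MonoIdx (vertexDim i (γ i))) :
    prodMultilinear γ (fun i => hspaceBasis _ (w i)) =
      hspaceBasis γ (Equiv.piCongrRight (fun i => vertexMonoIdxEquiv i (γ i)) w) := by
  ext1
  simp only [coe_prodMultilinear, coe_hspaceBasis, blockMsymm_vertexDim]
  rfl

theorem bijective_lift_prodMultilinear (γ : Fin n → ℕ) :
    Function.Bijective (PiTensorProduct.lift (prodMultilinear γ)) :=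
  PiTensorProduct.lift_bijective_of_basis (fun _ => hspaceBasis _) (hspaceBasis γ) _
    (prodMultilinear γ) (prodMultilinear_hspaceBasis γ)

theorem coha_simple_decomposition_general {n : ℕ} (Q : FinQuiver n)
    (hht : ∀ a : Q.Arr, Q.hd a < Q.tl a) :
    ∃ Φ : (⨁ γ : Fin n → ℕ,
            ⨂[ℚ] i : Fin n, ↥(Hspace fun v => if v = i then γ i else 0))
        →ₗ[ℚ] ⨁ γ : Fin n → ℕ, ↥(Hspace γ),
      (∀ (γ : Fin n → ℕ)
          (f : (i : Fin n) → ↥(Hspace fun v => if v = i then γ i else 0)),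
        ∃ hmem : cohaProdFin Q (fun i v => if v = i then γ i else 0)
            (fun i => (f i : PolyQ n)) ∈ Hspace γ,
          Φ (DirectSum.of (fun γ' : Fin n → ℕ =>
                ⨂[ℚ] i : Fin n, ↥(Hspace fun v => if v = i then γ' i else 0)) γ
              (PiTensorProduct.tprod ℚ f)) =
            DirectSum.of (fun γ' : Fin n → ℕ => ↥(Hspace γ')) γ
              ⟨cohaProdFin Q (fun i v => if v = i then γ i else 0)
                (fun i => (f i : PolyQ n)), hmem⟩) ∧
      Function.Bijective Φ := by
  refine ⟨DirectSum.lmap fun γ => PiTensorProduct.lift (prodMultilinear γ), fun γ f => ?_,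
    DirectSum.lmap_injective _ |>.2 fun γ => (bijective_lift_prodMultilinear γ).1,
    DirectSum.lmap_surjective _ |>.2 fun γ => (bijective_lift_prodMultilinear γ).2⟩
  have hprod : cohaProdFin Q (fun i => vertexDim i (γ i)) (fun i => (f i : PolyQ n)) =
      prodMultilinear γ f :=
    cohaProdFin_eq_prod (fun _ _ huv => Q.unlinked_vertexDim hht huv _ _) fun i => (f i).2.1
  refine ⟨hprod ▸ (prodMultilinear γ f).2, ?_⟩
  rw [DirectSum.lmap_of]
  exact congrArg _ (Subtype.ext ((congrArg Subtype.val (PiTensorProduct.lift.tprod f)).trans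
    hprod.symm))

/-- Let `Q` be a finite acyclic quiver whose vertices are ordered
head before tail.  Identifying symmetric polynomials in `m` variables with
`ℋ_{m·e_i}`, the `ℚ`-linear map
`⊕_γ (Λ_{γ(1)} ⊗ ⋯ ⊗ Λ_{γ(n)}) → ℋ(Q) = ⊕_γ ℋ_γ`, sending `f₁ ⊗ ⋯ ⊗ f_n` to the
left-to-right CoHA product `f₁ * ⋯ * f_n ∈ ℋ_γ`, is bijective; that is, the
`*`-multiplication induces an isomorphism `𝒜_{e_1} ⊗ ⋯ ⊗ 𝒜_{e_n} ≅ ℋ(Q)`. -/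
theorem coha_simple_decomposition {n : ℕ} (Q : FinQuiver n) (hQ : Q.Acyclic)
    (hht : ∀ a : Q.Arr, Q.hd a < Q.tl a) :
    ∃ Φ : (⨁ γ : Fin n → ℕ,
            ⨂[ℚ] i : Fin n, ↥(Hspace fun v => if v = i then γ i else 0))
        →ₗ[ℚ] ⨁ γ : Fin n → ℕ, ↥(Hspace γ),
      (∀ (γ : Fin n → ℕ)
          (f : (i : Fin n) → ↥(Hspace fun v => if v = i then γ i else 0)),
        ∃ hmem : cohaProdFin Q (fun i v => if v = i then γ i else 0)
            (fun i => (f i : PolyQ n)) ∈ Hspace γ,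
          Φ (DirectSum.of (fun γ' : Fin n → ℕ =>
                ⨂[ℚ] i : Fin n, ↥(Hspace fun v => if v = i then γ' i else 0)) γ
              (PiTensorProduct.tprod ℚ f)) =
            DirectSum.of (fun γ' : Fin n → ℕ => ↥(Hspace γ')) γ
              ⟨cohaProdFin Q (fun i v => if v = i then γ i else 0)
                (fun i => (f i : PolyQ n)), hmem⟩) ∧
      Function.Bijective Φ :=
  coha_simple_decomposition_general Q hht
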